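/- arXiv:2604.09495 — 4 statements merged into one kernel-verified Lean document; each statement's English description precedes it below -/
import Mathlib

section
/- Performance Improvement Guarantee (Proposition 1): Fix a risk parameter λ > 0, a joint agent-state based policy π, a time t ∈ {1,…,T}, and an agent i ∈ {1,2}. Let π̄^i_t be any greedy update for agent i at time t, and let π' denote the joint policy obtained from π by replacing the stage-t decision rule π^i_t with π̄^i_t (all other rules unchanged). Then J^λ_{t:T}(π') ≥ J^λ_{t:T}(π). -/
open Finset
open scoped Classical

/-- A two-agent finite-horizon Dec-POMDP. -/
structure DecPOMDP (S Y1 Y2 A1 A2 Z1 Z2 : Type)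
    [Fintype S] [Fintype Y1] [Fintype Y2] [Fintype A1] [Fintype A2]
    [Fintype Z1] [Fintype Z2] where
  P : S → A1 × A2 → S × Y1 × Y2 → ℝ
  P_nonneg : ∀ s a x, 0 ≤ P s a x
  P_sum : ∀ s a, ∑ x, P s a x = 1
  r : S → A1 × A2 → ℝ
  init : S × Y1 × Y2 → ℝ
  init_nonneg : ∀ x, 0 ≤ init x
  init_sum : ∑ x, init x = 1
  phi1 : Z1 → ℝ
  phi1_nonneg : ∀ z, 0 ≤ phi1 z
  phi1_sum : ∑ z, phi1 z = 1
  phi2 : Z2 → ℝ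
  phi2_nonneg : ∀ z, 0 ≤ phi2 z
  phi2_sum : ∑ z, phi2 z = 1
  T : ℕ
  T_pos : 1 ≤ T

variable {S Y1 Y2 A1 A2 Z1 Z2 : Type}
  [Fintype S] [Fintype Y1] [Fintype Y2] [Fintype A1] [Fintype A2]
  [Fintype Z1] [Fintype Z2]
  [Nonempty S] [Nonempty Y1] [Nonempty Y2] [Nonempty A1] [Nonempty A2]
  [Nonempty Z1] [Nonempty Z2]

/-- A stage decision rule is a pmf on actions and next agent states for each
observation/agent-state pair. -/
def IsRule {Y Z A : Type} [Fintype A] [Fintype Z] (ρ : Y → Z → A × Z → ℝ) : Prop :=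
  (∀ y z x, 0 ≤ ρ y z x) ∧ ∀ y z, ∑ x, ρ y z x = 1

/-- An agent-state based policy: a stage rule for every (0-indexed) time. -/
def IsPolicy {Y Z A : Type} [Fintype A] [Fintype Z] (π : ℕ → Y → Z → A × Z → ℝ) : Prop :=
  ∀ t, IsRule (π t)

/-- The marginal distribution ζ^π_t on (s_t, y_t, z_{t-1}) (time is 0-indexed). -/
noncomputable def zetaM (M : DecPOMDP S Y1 Y2 A1 A2 Z1 Z2)
    (π1 : ℕ → Y1 → Z1 → A1 × Z1 → ℝ) (π2 : ℕ → Y2 → Z2 → A2 × Z2 → ℝ) :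
    ℕ → S → Y1 × Y2 → Z1 × Z2 → ℝ
  | 0 => fun s y zm => M.init (s, y.1, y.2) * M.phi1 zm.1 * M.phi2 zm.2
  | (t+1) => fun s y zm =>
      ∑ s' : S, ∑ y' : Y1 × Y2, ∑ a' : A1 × A2, ∑ zm' : Z1 × Z2,
        zetaM M π1 π2 t s' y' zm' *
        (π1 t y'.1 zm'.1 (a'.1, zm.1) * π2 t y'.2 zm'.2 (a'.2, zm.2)) *
        M.P s' a' (s, y.1, y.2)

/-- Auxiliary risk-seeking centralized Q-function, indexed by the number `m` of
remaining steps, so that the Q-function at (0-indexed) time `t` is `Qaux (T-1-t)`. -/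
noncomputable def Qaux (M : DecPOMDP S Y1 Y2 A1 A2 Z1 Z2)
    (π1 : ℕ → Y1 → Z1 → A1 × Z1 → ℝ) (π2 : ℕ → Y2 → Z2 → A2 × Z2 → ℝ) (lam : ℝ) :
    ℕ → S → Y1 × Y2 → Z1 × Z2 → A1 × A2 → Z1 × Z2 → ℝ
  | 0 => fun s _ _ a _ => M.r s a
  | (m+1) => fun s _ _ a z => M.r s a + (1/lam) * Real.log
      (∑ sp : S, ∑ yp : Y1 × Y2, ∑ ap : A1 × A2, ∑ zp : Z1 × Z2,
        M.P s a (sp, yp.1, yp.2) *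
        (π1 (M.T - 1 - m) yp.1 z.1 (ap.1, zp.1) * π2 (M.T - 1 - m) yp.2 z.2 (ap.2, zp.2)) *
        Real.exp (lam * Qaux M π1 π2 lam m sp yp z ap zp))

/-- The risk-seeking centralized Q-function at (0-indexed) time `t`. -/
noncomputable def Qfun (M : DecPOMDP S Y1 Y2 A1 A2 Z1 Z2)
    (π1 : ℕ → Y1 → Z1 → A1 × Z1 → ℝ) (π2 : ℕ → Y2 → Z2 → A2 × Z2 → ℝ) (lam : ℝ) (t : ℕ) :
    S → Y1 × Y2 → Z1 × Z2 → A1 × A2 → Z1 × Z2 → ℝ :=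
  Qaux M π1 π2 lam (M.T - 1 - t)

/-- Risk-seeking performance J^λ_{t:T}(π) (time is 0-indexed). -/
noncomputable def Jrisk (M : DecPOMDP S Y1 Y2 A1 A2 Z1 Z2)
    (π1 : ℕ → Y1 → Z1 → A1 × Z1 → ℝ) (π2 : ℕ → Y2 → Z2 → A2 × Z2 → ℝ)
    (lam : ℝ) (t : ℕ) : ℝ :=
  (1/lam) * Real.log
    (∑ s : S, ∑ y : Y1 × Y2, ∑ zm : Z1 × Z2, ∑ a : A1 × A2, ∑ z : Z1 × Z2,
      zetaM M π1 π2 t s y zm *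
      (π1 t y.1 zm.1 (a.1, z.1) * π2 t y.2 zm.2 (a.2, z.2)) *
      Real.exp (lam * Qfun M π1 π2 lam t s y zm a z))

/-- Marginal of ζ^π_t on agent 1's (observation, previous agent state). -/
noncomputable def marg1 (M : DecPOMDP S Y1 Y2 A1 A2 Z1 Z2)
    (π1 : ℕ → Y1 → Z1 → A1 × Z1 → ℝ) (π2 : ℕ → Y2 → Z2 → A2 × Z2 → ℝ)
    (t : ℕ) (y1 : Y1) (z1m : Z1) : ℝ :=
  ∑ s : S, ∑ y2 : Y2, ∑ z2m : Z2, zetaM M π1 π2 t s (y1, y2) (z1m, z2m)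

/-- Marginal of ζ^π_t on agent 2's (observation, previous agent state). -/
noncomputable def marg2 (M : DecPOMDP S Y1 Y2 A1 A2 Z1 Z2)
    (π1 : ℕ → Y1 → Z1 → A1 × Z1 → ℝ) (π2 : ℕ → Y2 → Z2 → A2 × Z2 → ℝ)
    (t : ℕ) (y2 : Y2) (z2m : Z2) : ℝ :=
  ∑ s : S, ∑ y1 : Y1, ∑ z1m : Z1, zetaM M π1 π2 t s (y1, y2) (z1m, z2m)

/-- Averaged local Q-function for agent 1 at time t. -/
noncomputable def Qbar1 (M : DecPOMDP S Y1 Y2 A1 A2 Z1 Z2)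
    (π1 : ℕ → Y1 → Z1 → A1 × Z1 → ℝ) (π2 : ℕ → Y2 → Z2 → A2 × Z2 → ℝ)
    (lam : ℝ) (t : ℕ) (y1 : Y1) (z1m : Z1) (a1 : A1) (z1 : Z1) : ℝ :=
  (1/lam) * Real.log
    (∑ s : S, ∑ y2 : Y2, ∑ z2m : Z2, ∑ a2 : A2, ∑ z2 : Z2,
      (zetaM M π1 π2 t s (y1, y2) (z1m, z2m) / marg1 M π1 π2 t y1 z1m) *
      π2 t y2 z2m (a2, z2) *
      Real.exp (lam * Qfun M π1 π2 lam t s (y1, y2) (z1m, z2m) (a1, a2) (z1, z2)))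

/-- Averaged local Q-function for agent 2 at time t. -/
noncomputable def Qbar2 (M : DecPOMDP S Y1 Y2 A1 A2 Z1 Z2)
    (π1 : ℕ → Y1 → Z1 → A1 × Z1 → ℝ) (π2 : ℕ → Y2 → Z2 → A2 × Z2 → ℝ)
    (lam : ℝ) (t : ℕ) (y2 : Y2) (z2m : Z2) (a2 : A2) (z2 : Z2) : ℝ :=
  (1/lam) * Real.log
    (∑ s : S, ∑ y1 : Y1, ∑ z1m : Z1, ∑ a1 : A1, ∑ z1 : Z1,
      (zetaM M π1 π2 t s (y1, y2) (z1m, z2m) / marg2 M π1 π2 t y2 z2m) *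
      π1 t y1 z1m (a1, z1) *
      Real.exp (lam * Qfun M π1 π2 lam t s (y1, y2) (z1m, z2m) (a1, a2) (z1, z2)))

/-- `g` is a greedy update for agent 1 at time `t`: at each (y¹,z¹₋) with positive
marginal probability it selects a maximizer of the averaged local Q-function. -/
def IsGreedy1 (M : DecPOMDP S Y1 Y2 A1 A2 Z1 Z2)
    (π1 : ℕ → Y1 → Z1 → A1 × Z1 → ℝ) (π2 : ℕ → Y2 → Z2 → A2 × Z2 → ℝ)
    (lam : ℝ) (t : ℕ) (g : Y1 → Z1 → A1 × Z1) : Prop :=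
  ∀ y1 z1m, 0 < marg1 M π1 π2 t y1 z1m →
    ∀ a1 z1, Qbar1 M π1 π2 lam t y1 z1m a1 z1 ≤
      Qbar1 M π1 π2 lam t y1 z1m (g y1 z1m).1 (g y1 z1m).2

/-- `g` is a greedy update for agent 2 at time `t`. -/
def IsGreedy2 (M : DecPOMDP S Y1 Y2 A1 A2 Z1 Z2)
    (π1 : ℕ → Y1 → Z1 → A1 × Z1 → ℝ) (π2 : ℕ → Y2 → Z2 → A2 × Z2 → ℝ)
    (lam : ℝ) (t : ℕ) (g : Y2 → Z2 → A2 × Z2) : Prop :=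
  ∀ y2 z2m, 0 < marg2 M π1 π2 t y2 z2m →
    ∀ a2 z2, Qbar2 M π1 π2 lam t y2 z2m a2 z2 ≤
      Qbar2 M π1 π2 lam t y2 z2m (g y2 z2m).1 (g y2 z2m).2

/-- The (deterministic) stage rule that puts all mass on `g y z`. -/
noncomputable def detRule {Y Z A : Type} (g : Y → Z → A × Z) : Y → Z → A × Z → ℝ :=
  fun y z x => if x = g y z then 1 else 0

/-!
The stage-`t` marginal `ζ^π_t` only involves the rules before `t`, and `Q^π_t` only the rules
after `t`, so replacing `π¹_t` changes nothing but the stage-`t` weights. Grouping the sum that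
defines `exp (λ J_{t:T})` by agent 1's local information `(y¹, z¹₋)` writes it as
`∑ π¹_t (a¹, z¹ | y¹, z¹₋) W (y¹, z¹₋, a¹, z¹)`, where `W = ζ^π_t(y¹, z¹₋) exp (λ Q̄^{π,1}_t)`
is `weightedExpQbar1`.
A greedy rule maximizes `W` wherever `ζ^π_t(y¹, z¹₋) > 0`, and `W` vanishes elsewhere, so the
average of `W` under `π¹_t` is dominated by its value at the greedy choice. Agent 2 is agent 1
of the Dec-POMDP with the roles of the two agents exchanged.
-/

theorem exists_pos_of_sum_pos {ι M : Type*} [AddCommMonoid M] [LinearOrder M] [AddLeftMono M]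
    {s : Finset ι} {f : ι → M} (h : 0 < ∑ i ∈ s, f i) : ∃ i ∈ s, 0 < f i :=
  exists_lt_of_sum_lt (by rwa [sum_const_zero])

theorem log_sum_sum_mul_le_log_sum {I X : Type*} [Fintype I] [Fintype X]
    {ρ F : I → X → ℝ} {g : I → X} (hρ0 : ∀ i x, 0 ≤ ρ i x) (hρ1 : ∀ i, ∑ x, ρ i x = 1)
    (hF : ∀ i, (∀ x, F i x = 0) ∨ ∀ x, 0 < F i x) (hg : ∀ i x, F i x ≤ F i (g i)) :
    Real.log (∑ i, ∑ x, ρ i x * F i x) ≤ Real.log (∑ i, F i (g i)) := by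
  have hF0 : ∀ i x, 0 ≤ F i x := fun i x => (hF i).elim (fun h => (h x).ge) fun h => (h x).le
  have hterm_nonneg : ∀ i, 0 ≤ ∑ x, ρ i x * F i x := fun i =>
    sum_nonneg fun x _ => mul_nonneg (hρ0 i x) (hF0 i x)
  have hterm_le : ∀ i, ∑ x, ρ i x * F i x ≤ F i (g i) := fun i =>
    calc ∑ x, ρ i x * F i x ≤ ∑ x, ρ i x * F i (g i) :=
          sum_le_sum fun x _ => mul_le_mul_of_nonneg_left (hg i x) (hρ0 i x)
      _ = F i (g i) := by rw [← sum_mul, hρ1 i, one_mul]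
  have hterm_pos : ∀ i, 0 < F i (g i) → 0 < ∑ x, ρ i x * F i x := by
    intro i hi
    have hpos : ∀ x, 0 < F i x := (hF i).resolve_left fun h => hi.ne' (h (g i))
    obtain ⟨x, -, hx⟩ := exists_pos_of_sum_pos (hρ1 i ▸ one_pos)
    exact sum_pos' (fun x _ => mul_nonneg (hρ0 i x) (hF0 i x))
      ⟨x, mem_univ x, mul_pos hx (hpos x)⟩
  -- `Real.log 0 = 0`, so a vanishing right-hand side is treated apart.
  rcases (sum_nonneg fun i _ => hF0 i (g i) : 0 ≤ ∑ i, F i (g i)).eq_or_lt with h | h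
  · have hsum : ∑ i, ∑ x, ρ i x * F i x = 0 :=
      le_antisymm (h ▸ sum_le_sum fun i _ => hterm_le i) (sum_nonneg fun i _ => hterm_nonneg i)
    rw [hsum, ← h]
  · obtain ⟨i, -, hi⟩ := exists_pos_of_sum_pos h
    refine Real.log_le_log ?_ (sum_le_sum fun i _ => hterm_le i)
    exact (hterm_pos i hi).trans_le (single_le_sum (fun j _ => hterm_nonneg j) (mem_univ i))

theorem sum_swap_snd {α β γ M : Type*} [Fintype α] [Fintype β] [Fintype γ] [AddCommMonoid M]
    (f : α × β × γ → M) : ∑ x : α × γ × β, f (x.1, x.2.2, x.2.1) = ∑ x, f x :=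
  Fintype.sum_equiv ((Equiv.refl α).prodCongr (Equiv.prodComm γ β)) _ _ fun _ => rfl

noncomputable def weightedExpQbar1 (M : DecPOMDP S Y1 Y2 A1 A2 Z1 Z2)
    (π1 : ℕ → Y1 → Z1 → A1 × Z1 → ℝ) (π2 : ℕ → Y2 → Z2 → A2 × Z2 → ℝ)
    (lam : ℝ) (t : ℕ) (y1 : Y1) (z1m : Z1) (a1 : A1) (z1 : Z1) : ℝ :=
  ∑ s : S, ∑ y2 : Y2, ∑ z2m : Z2, ∑ a2 : A2, ∑ z2 : Z2,
    zetaM M π1 π2 t s (y1, y2) (z1m, z2m) * π2 t y2 z2m (a2, z2) *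
      Real.exp (lam * Qfun M π1 π2 lam t s (y1, y2) (z1m, z2m) (a1, a2) (z1, z2))

def DecPOMDP.swap (M : DecPOMDP S Y1 Y2 A1 A2 Z1 Z2) : DecPOMDP S Y2 Y1 A2 A1 Z2 Z1 where
  P s a x := M.P s a.swap (x.1, x.2.2, x.2.1)
  P_nonneg _ _ _ := M.P_nonneg ..
  P_sum s a := (sum_swap_snd _).trans (M.P_sum s a.swap)
  r s a := M.r s a.swap
  init x := M.init (x.1, x.2.2, x.2.1)
  init_nonneg _ := M.init_nonneg _
  init_sum := (sum_swap_snd _).trans M.init_sum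
  phi1 := M.phi2
  phi1_nonneg := M.phi2_nonneg
  phi1_sum := M.phi2_sum
  phi2 := M.phi1
  phi2_nonneg := M.phi1_nonneg
  phi2_sum := M.phi1_sum
  T := M.T
  T_pos := M.T_pos

section

omit [Nonempty S] [Nonempty Y1] [Nonempty Y2] [Nonempty A1] [Nonempty A2] [Nonempty Z1]
  [Nonempty Z2]

variable (M : DecPOMDP S Y1 Y2 A1 A2 Z1 Z2) {π1 : ℕ → Y1 → Z1 → A1 × Z1 → ℝ}
  {π2 : ℕ → Y2 → Z2 → A2 × Z2 → ℝ} {lam : ℝ} {t : ℕ}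

theorem zetaM_nonneg (hπ1 : IsPolicy π1) (hπ2 : IsPolicy π2) (s : S) (y : Y1 × Y2)
    (zm : Z1 × Z2) : 0 ≤ zetaM M π1 π2 t s y zm := by
  induction t generalizing s y zm with
  | zero => exact mul_nonneg (mul_nonneg (M.init_nonneg _) (M.phi1_nonneg _)) (M.phi2_nonneg _)
  | succ t ih =>
    exact sum_nonneg fun _ _ => sum_nonneg fun _ _ => sum_nonneg fun _ _ => sum_nonneg fun _ _ =>
      mul_nonneg (mul_nonneg (ih ..) (mul_nonneg ((hπ1 t).1 ..) ((hπ2 t).1 ..))) (M.P_nonneg ..)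

theorem zetaM_congr {π1' : ℕ → Y1 → Z1 → A1 × Z1 → ℝ} {π2' : ℕ → Y2 → Z2 → A2 × Z2 → ℝ}
    (h1 : ∀ k < t, π1 k = π1' k) (h2 : ∀ k < t, π2 k = π2' k) :
    zetaM M π1 π2 t = zetaM M π1' π2' t := by
  induction t with
  | zero => rfl
  | succ t ih =>
    have ih' := ih (fun k hk => h1 k (by omega)) (fun k hk => h2 k (by omega))
    simp only [zetaM, ih', h1 t t.lt_succ_self, h2 t t.lt_succ_self]

theorem Qaux_congr {π1' : ℕ → Y1 → Z1 → A1 × Z1 → ℝ} {π2' : ℕ → Y2 → Z2 → A2 × Z2 → ℝ}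
    {m : ℕ} (h1 : ∀ k < m, π1 (M.T - 1 - k) = π1' (M.T - 1 - k))
    (h2 : ∀ k < m, π2 (M.T - 1 - k) = π2' (M.T - 1 - k)) :
    Qaux M π1 π2 lam m = Qaux M π1' π2' lam m := by
  induction m with
  | zero => rfl
  | succ m ih =>
    have ih' := ih (fun k hk => h1 k (by omega)) (fun k hk => h2 k (by omega))
    simp only [Qaux, ih', h1 m m.lt_succ_self, h2 m m.lt_succ_self]

theorem zetaM_update_left (ρ : Y1 → Z1 → A1 × Z1 → ℝ) :
    zetaM M (Function.update π1 t ρ) π2 t = zetaM M π1 π2 t :=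
  zetaM_congr M (fun _ hk => Function.update_of_ne hk.ne _ _) fun _ _ => rfl

theorem Qfun_update_left (ρ : Y1 → Z1 → A1 × Z1 → ℝ) :
    Qfun M (Function.update π1 t ρ) π2 lam t = Qfun M π1 π2 lam t :=
  Qaux_congr M (fun _ _ => Function.update_of_ne (by omega) _ _) fun _ _ => rfl

theorem marg1_nonneg (hπ1 : IsPolicy π1) (hπ2 : IsPolicy π2) (y1 : Y1) (z1m : Z1) :
    0 ≤ marg1 M π1 π2 t y1 z1m :=
  sum_nonneg fun _ _ => sum_nonneg fun _ _ => sum_nonneg fun _ _ => zetaM_nonneg M hπ1 hπ2 ..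

theorem zetaM_eq_zero_of_marg1_eq_zero (hπ1 : IsPolicy π1) (hπ2 : IsPolicy π2) {y1 : Y1}
    {z1m : Z1} (h : marg1 M π1 π2 t y1 z1m = 0) (s : S) (y2 : Y2) (z2m : Z2) :
    zetaM M π1 π2 t s (y1, y2) (z1m, z2m) = 0 := by
  simp only [marg1, ← Fintype.sum_prod_type'] at h
  exact (sum_eq_zero_iff_of_nonneg fun _ _ => zetaM_nonneg M hπ1 hπ2 ..).1 h (s, y2, z2m)
    (mem_univ _)

theorem exists_zetaM_pos_of_marg1_pos {y1 : Y1} {z1m : Z1} (h : 0 < marg1 M π1 π2 t y1 z1m) :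
    ∃ s y2 z2m, 0 < zetaM M π1 π2 t s (y1, y2) (z1m, z2m) := by
  by_contra! hle
  exact h.not_ge (sum_nonpos fun s _ => sum_nonpos fun y2 _ => sum_nonpos fun z2m _ =>
    hle s y2 z2m)

theorem sum_joint_eq_sum_agent1 (f : S → Y1 × Y2 → Z1 × Z2 → A1 × A2 → Z1 × Z2 → ℝ) :
    ∑ s, ∑ y, ∑ zm, ∑ a, ∑ z, f s y zm a z =
      ∑ i : Y1 × Z1, ∑ x : A1 × Z1, ∑ s, ∑ y2, ∑ z2m, ∑ a2, ∑ z2,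
        f s (i.1, y2) (i.2, z2m) (x.1, a2) (x.2, z2) := by
  let e : (Y1 × Z1) × (A1 × Z1) × S × Y2 × Z2 × A2 × Z2 ≃
      S × (Y1 × Y2) × (Z1 × Z2) × (A1 × A2) × (Z1 × Z2) :=
    ⟨fun p => (p.2.2.1, (p.1.1, p.2.2.2.1), (p.1.2, p.2.2.2.2.1), (p.2.1.1, p.2.2.2.2.2.1),
      (p.2.1.2, p.2.2.2.2.2.2)), fun q => ((q.2.1.1, q.2.2.1.1), (q.2.2.2.1.1, q.2.2.2.2.1),
      q.1, q.2.1.2, q.2.2.1.2, q.2.2.2.1.2, q.2.2.2.2.2), fun _ => rfl, fun _ => rfl⟩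
  simp only [← Fintype.sum_prod_type']
  exact (Fintype.sum_equiv e _ _ fun _ => rfl).symm

theorem Jrisk_eq_log_sum_weightedExpQbar1 :
    Jrisk M π1 π2 lam t = 1 / lam * Real.log (∑ i : Y1 × Z1, ∑ x : A1 × Z1,
      π1 t i.1 i.2 x * weightedExpQbar1 M π1 π2 lam t i.1 i.2 x.1 x.2) := by
  simp only [Jrisk, weightedExpQbar1, mul_sum, sum_joint_eq_sum_agent1]
  congr! 9
  ring

theorem Qbar1_eq_log_div (y1 : Y1) (z1m : Z1) (a1 : A1) (z1 : Z1) :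
    Qbar1 M π1 π2 lam t y1 z1m a1 z1 = 1 / lam *
      Real.log (weightedExpQbar1 M π1 π2 lam t y1 z1m a1 z1 / marg1 M π1 π2 t y1 z1m) := by
  simp only [Qbar1, weightedExpQbar1, sum_div, div_mul_eq_mul_div]

theorem weightedExpQbar1_update_left (ρ : Y1 → Z1 → A1 × Z1 → ℝ) :
    weightedExpQbar1 M (Function.update π1 t ρ) π2 lam t = weightedExpQbar1 M π1 π2 lam t := by
  ext
  simp only [weightedExpQbar1, zetaM_update_left, Qfun_update_left]

theorem weightedExpQbar1_eq_zero_of_marg1_eq_zero (hπ1 : IsPolicy π1) (hπ2 : IsPolicy π2)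
    {y1 : Y1} {z1m : Z1} (h : marg1 M π1 π2 t y1 z1m = 0) (a1 : A1) (z1 : Z1) :
    weightedExpQbar1 M π1 π2 lam t y1 z1m a1 z1 = 0 := by
  simp [weightedExpQbar1, zetaM_eq_zero_of_marg1_eq_zero M hπ1 hπ2 h]

theorem weightedExpQbar1_pos_of_marg1_pos (hπ1 : IsPolicy π1) (hπ2 : IsPolicy π2)
    {y1 : Y1} {z1m : Z1} (h : 0 < marg1 M π1 π2 t y1 z1m) (a1 : A1) (z1 : Z1) :
    0 < weightedExpQbar1 M π1 π2 lam t y1 z1m a1 z1 := by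
  obtain ⟨s, y2, z2m, hζ⟩ := exists_zetaM_pos_of_marg1_pos M h
  obtain ⟨x2, -, hx2⟩ := exists_pos_of_sum_pos ((hπ2 t).2 y2 z2m ▸ one_pos)
  simp only [weightedExpQbar1, ← Fintype.sum_prod_type']
  exact sum_pos' (fun _ _ => mul_nonneg (mul_nonneg (zetaM_nonneg M hπ1 hπ2 ..)
    ((hπ2 t).1 ..)) (Real.exp_nonneg _)) ⟨(s, y2, z2m, x2), mem_univ _,
      mul_pos (mul_pos hζ hx2) (Real.exp_pos _)⟩

theorem weightedExpQbar1_eq_zero_or_pos (hπ1 : IsPolicy π1) (hπ2 : IsPolicy π2) (y1 : Y1)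
    (z1m : Z1) :
    (∀ x : A1 × Z1, weightedExpQbar1 M π1 π2 lam t y1 z1m x.1 x.2 = 0) ∨
      ∀ x : A1 × Z1, 0 < weightedExpQbar1 M π1 π2 lam t y1 z1m x.1 x.2 := by
  rcases (marg1_nonneg M hπ1 hπ2 y1 z1m).eq_or_lt with h | h
  · exact .inl fun _ => weightedExpQbar1_eq_zero_of_marg1_eq_zero M hπ1 hπ2 h.symm ..
  · exact .inr fun _ => weightedExpQbar1_pos_of_marg1_pos M hπ1 hπ2 h ..

theorem weightedExpQbar1_le_of_isGreedy1 (hπ1 : IsPolicy π1) (hπ2 : IsPolicy π2)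
    (hlam : 0 < lam) {g : Y1 → Z1 → A1 × Z1} (hg : IsGreedy1 M π1 π2 lam t g) (y1 : Y1)
    (z1m : Z1) (a1 : A1) (z1 : Z1) :
    weightedExpQbar1 M π1 π2 lam t y1 z1m a1 z1 ≤
      weightedExpQbar1 M π1 π2 lam t y1 z1m (g y1 z1m).1 (g y1 z1m).2 := by
  rcases (marg1_nonneg M hπ1 hπ2 y1 z1m).eq_or_lt with h | h
  · have h0 := weightedExpQbar1_eq_zero_of_marg1_eq_zero M (lam := lam) hπ1 hπ2 h.symm
    rw [h0, h0]
  · have hQ := hg y1 z1m h a1 z1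
    rw [Qbar1_eq_log_div, Qbar1_eq_log_div, mul_le_mul_iff_right₀ (one_div_pos.2 hlam),
      Real.log_le_log_iff (div_pos (weightedExpQbar1_pos_of_marg1_pos M hπ1 hπ2 h ..) h)
        (div_pos (weightedExpQbar1_pos_of_marg1_pos M hπ1 hπ2 h ..) h)] at hQ
    exact (div_le_div_iff_of_pos_right h).1 hQ

theorem Jrisk_le_Jrisk_update_of_isGreedy1 (hπ1 : IsPolicy π1) (hπ2 : IsPolicy π2)
    (hlam : 0 < lam) {g : Y1 → Z1 → A1 × Z1} (hg : IsGreedy1 M π1 π2 lam t g) :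
    Jrisk M π1 π2 lam t ≤ Jrisk M (Function.update π1 t (detRule g)) π2 lam t := by
  rw [Jrisk_eq_log_sum_weightedExpQbar1, Jrisk_eq_log_sum_weightedExpQbar1,
    weightedExpQbar1_update_left, Function.update_self]
  simp only [detRule, ite_mul, one_mul, zero_mul, sum_ite_eq', mem_univ, if_true]
  exact mul_le_mul_of_nonneg_left (log_sum_sum_mul_le_log_sum (fun i => (hπ1 t).1 i.1 i.2)
    (fun i => (hπ1 t).2 i.1 i.2) (fun i => weightedExpQbar1_eq_zero_or_pos M hπ1 hπ2 i.1 i.2)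
    fun i _ => weightedExpQbar1_le_of_isGreedy1 M hπ1 hπ2 hlam hg ..) (one_div_pos.2 hlam).le

variable (π1 π2 lam t)

theorem zetaM_swap (s : S) (y : Y2 × Y1) (zm : Z2 × Z1) :
    zetaM M.swap π2 π1 t s y zm = zetaM M π1 π2 t s y.swap zm.swap := by
  induction t generalizing s y zm with
  | zero => simp only [zetaM, DecPOMDP.swap, Prod.fst_swap, Prod.snd_swap]; ring
  | succ t ih =>
    simp only [zetaM, ih]
    refine sum_congr rfl fun s' _ => Fintype.sum_equiv (Equiv.prodComm _ _) _ _ fun y' =>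
      Fintype.sum_equiv (Equiv.prodComm _ _) _ _ fun a' =>
        Fintype.sum_equiv (Equiv.prodComm _ _) _ _ fun zm' => ?_
    simp only [DecPOMDP.swap, Equiv.prodComm_apply, Prod.fst_swap, Prod.snd_swap]
    ring

theorem Qaux_swap (m : ℕ) (s : S) (y : Y2 × Y1) (zm : Z2 × Z1) (a : A2 × A1) (z : Z2 × Z1) :
    Qaux M.swap π2 π1 lam m s y zm a z = Qaux M π1 π2 lam m s y.swap zm.swap a.swap z.swap := by
  induction m generalizing s y zm a z with
  | zero => rfl
  | succ m ih =>
    simp only [Qaux, ih]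
    refine congrArg (fun x => M.r s a.swap + 1 / lam * Real.log x) ?_
    refine sum_congr rfl fun sp _ => Fintype.sum_equiv (Equiv.prodComm _ _) _ _ fun yp =>
      Fintype.sum_equiv (Equiv.prodComm _ _) _ _ fun ap =>
        Fintype.sum_equiv (Equiv.prodComm _ _) _ _ fun zp => ?_
    simp only [DecPOMDP.swap, Equiv.prodComm_apply, Prod.fst_swap, Prod.snd_swap]
    ring

theorem Qfun_swap (s : S) (y : Y2 × Y1) (zm : Z2 × Z1) (a : A2 × A1) (z : Z2 × Z1) :
    Qfun M.swap π2 π1 lam t s y zm a z = Qfun M π1 π2 lam t s y.swap zm.swap a.swap z.swap :=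
  Qaux_swap M π1 π2 lam _ s y zm a z

theorem Jrisk_swap : Jrisk M.swap π2 π1 lam t = Jrisk M π1 π2 lam t := by
  simp only [Jrisk, zetaM_swap, Qfun_swap]
  congr 2
  refine sum_congr rfl fun s _ => Fintype.sum_equiv (Equiv.prodComm _ _) _ _ fun y =>
    Fintype.sum_equiv (Equiv.prodComm _ _) _ _ fun zm =>
      Fintype.sum_equiv (Equiv.prodComm _ _) _ _ fun a =>
        Fintype.sum_equiv (Equiv.prodComm _ _) _ _ fun z => ?_
  simp only [Equiv.prodComm_apply, Prod.fst_swap, Prod.snd_swap]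
  ring

theorem marg1_swap : marg1 M.swap π2 π1 t = marg2 M π1 π2 t := by
  ext
  simp only [marg1, marg2, zetaM_swap, Prod.swap_prod_mk]

theorem Qbar1_swap : Qbar1 M.swap π2 π1 lam t = Qbar2 M π1 π2 lam t := by
  ext
  simp only [Qbar1, Qbar2, zetaM_swap, Qfun_swap, marg1_swap, Prod.swap_prod_mk]

theorem isGreedy1_swap (g : Y2 → Z2 → A2 × Z2) :
    IsGreedy1 M.swap π2 π1 lam t g ↔ IsGreedy2 M π1 π2 lam t g := by
  simp only [IsGreedy1, IsGreedy2, marg1_swap, Qbar1_swap]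

end

theorem performance_improvement_guarantee_general
    (M : DecPOMDP S Y1 Y2 A1 A2 Z1 Z2)
    (π1 : ℕ → Y1 → Z1 → A1 × Z1 → ℝ) (π2 : ℕ → Y2 → Z2 → A2 × Z2 → ℝ)
    (hπ1 : IsPolicy π1) (hπ2 : IsPolicy π2)
    (lam : ℝ) (hlam : 0 < lam) (t : ℕ) :
    (∀ g : Y1 → Z1 → A1 × Z1, IsGreedy1 M π1 π2 lam t g →
      Jrisk M π1 π2 lam t ≤ Jrisk M (Function.update π1 t (detRule g)) π2 lam t) ∧
    (∀ g : Y2 → Z2 → A2 × Z2, IsGreedy2 M π1 π2 lam t g →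
      Jrisk M π1 π2 lam t ≤ Jrisk M π1 (Function.update π2 t (detRule g)) lam t) := by
  refine ⟨fun g hg => Jrisk_le_Jrisk_update_of_isGreedy1 M hπ1 hπ2 hlam hg, fun g hg => ?_⟩
  rw [← Jrisk_swap M π1 π2, ← Jrisk_swap M π1]
  exact Jrisk_le_Jrisk_update_of_isGreedy1 M.swap hπ2 hπ1 hlam
    ((isGreedy1_swap M π1 π2 lam t g).2 hg)

/-- **Proposition 1 (Performance Improvement Guarantee).**
For λ > 0, a joint agent-state based policy (π1, π2), a time t ∈ {1,…,T}
(0-indexed: t < T) and either agent i ∈ {1,2}: if π̄ⁱ_t is any greedy update for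
agent i at time t and π' is obtained from π by replacing the stage-t rule of
agent i by π̄ⁱ_t, then J^λ_{t:T}(π') ≥ J^λ_{t:T}(π). -/
theorem performance_improvement_guarantee
    (M : DecPOMDP S Y1 Y2 A1 A2 Z1 Z2)
    (π1 : ℕ → Y1 → Z1 → A1 × Z1 → ℝ) (π2 : ℕ → Y2 → Z2 → A2 × Z2 → ℝ)
    (hπ1 : IsPolicy π1) (hπ2 : IsPolicy π2)
    (lam : ℝ) (hlam : 0 < lam) (t : ℕ) (ht : t < M.T) :
    (∀ g : Y1 → Z1 → A1 × Z1, IsGreedy1 M π1 π2 lam t g →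
      Jrisk M π1 π2 lam t ≤ Jrisk M (Function.update π1 t (detRule g)) π2 lam t) ∧
    (∀ g : Y2 → Z2 → A2 × Z2, IsGreedy2 M π1 π2 lam t g →
      Jrisk M π1 π2 lam t ≤ Jrisk M π1 (Function.update π2 t (detRule g)) lam t) :=
  performance_improvement_guarantee_general M π1 π2 hπ1 hπ2 lam hlam t
end

section
/- The risk-seeking centralized Q-function computes the conditional entropic value of the reward-to-go: Fix λ > 0 and a joint agent-state based policy π. For every t ∈ {1,…,T} and every (s,y,z₋,a,z) such that P^π(S_t = s, Y_t = y, Z_{t−1} = z₋, A_t = a, Z_t = z) > 0, one has exp(λ·Q^π_t(s,y,z₋,a,z)) = E^π[ exp(λ·Σ_{τ=t}^{T} r(S_τ,A_τ)) | S_t = s, Y_t = y, Z_{t−1} = z₋, A_t = a, Z_t = z ]. Consequently, the risk-seeking performance from time t satisfies J^λ_{t:T}(π) = (1/λ)·log E^π[ exp(λ·Σ_{τ=t}^{T} r(S_τ,A_τ)) ]. -/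
open Finset
open scoped Classical

variable {S Y1 Y2 A1 A2 Z1 Z2 : Type}
  [Fintype S] [Fintype Y1] [Fintype Y2] [Fintype A1] [Fintype A2]
  [Fintype Z1] [Fintype Z2]
  [Nonempty S] [Nonempty Y1] [Nonempty Y2] [Nonempty A1] [Nonempty A2]
  [Nonempty Z1] [Nonempty Z2]

/-- Trajectory space: the initial agent states z₀ together with, for each
(0-indexed) time t < T, the tuple ((s_t, y_t), (a_t, z_t)). -/
abbrev Traj (M : DecPOMDP S Y1 Y2 A1 A2 Z1 Z2) : Type :=
  (Z1 × Z2) × (Fin M.T → (S × (Y1 × Y2)) × ((A1 × A2) × (Z1 × Z2)))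

def sOf (M : DecPOMDP S Y1 Y2 A1 A2 Z1 Z2) (ω : Traj M) (t : Fin M.T) : S :=
  (ω.2 t).1.1
def yOf (M : DecPOMDP S Y1 Y2 A1 A2 Z1 Z2) (ω : Traj M) (t : Fin M.T) : Y1 × Y2 :=
  (ω.2 t).1.2
def aOf (M : DecPOMDP S Y1 Y2 A1 A2 Z1 Z2) (ω : Traj M) (t : Fin M.T) : A1 × A2 :=
  (ω.2 t).2.1
def zOf (M : DecPOMDP S Y1 Y2 A1 A2 Z1 Z2) (ω : Traj M) (t : Fin M.T) : Z1 × Z2 :=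
  (ω.2 t).2.2

/-- The agent state Z_{t-1} held before acting at time t (Z at time −1 is z₀). -/
def zprev (M : DecPOMDP S Y1 Y2 A1 A2 Z1 Z2) (ω : Traj M) (t : Fin M.T) : Z1 × Z2 :=
  if t.val = 0 then ω.1
  else zOf M ω ⟨t.val - 1, lt_of_le_of_lt (Nat.sub_le _ _) t.isLt⟩

/-- Probability of a trajectory under the joint agent-state based policy (π1, π2):
φ¹(z¹₀)·φ²(z²₀)·ζ₁(s₁,y₁)·Π_t π_t(a_t,z_t|y_t,z_{t−1})·Π_t P(s_{t+1},y_{t+1}|s_t,a_t). -/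
noncomputable def trajProb (M : DecPOMDP S Y1 Y2 A1 A2 Z1 Z2)
    (π1 : ℕ → Y1 → Z1 → A1 × Z1 → ℝ) (π2 : ℕ → Y2 → Z2 → A2 × Z2 → ℝ)
    (ω : Traj M) : ℝ :=
  M.phi1 ω.1.1 * M.phi2 ω.1.2 *
  M.init (sOf M ω ⟨0, M.T_pos⟩, (yOf M ω ⟨0, M.T_pos⟩).1, (yOf M ω ⟨0, M.T_pos⟩).2) *
  (∏ t : Fin M.T,
    (π1 t.val (yOf M ω t).1 (zprev M ω t).1 ((aOf M ω t).1, (zOf M ω t).1) *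
     π2 t.val (yOf M ω t).2 (zprev M ω t).2 ((aOf M ω t).2, (zOf M ω t).2))) *
  (∏ t : Fin M.T,
    if h : t.val + 1 < M.T then
      M.P (sOf M ω t) (aOf M ω t)
        (sOf M ω ⟨t.val + 1, h⟩, (yOf M ω ⟨t.val + 1, h⟩).1, (yOf M ω ⟨t.val + 1, h⟩).2)
    else 1)

/-- Probability of an event in trajectory space. -/
noncomputable def prEvent (M : DecPOMDP S Y1 Y2 A1 A2 Z1 Z2)
    (π1 : ℕ → Y1 → Z1 → A1 × Z1 → ℝ) (π2 : ℕ → Y2 → Z2 → A2 × Z2 → ℝ)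
    (E : Traj M → Prop) : ℝ :=
  ∑ ω : Traj M, if E ω then trajProb M π1 π2 ω else 0

/-!
Along a trajectory the tuples `κ_t = (s_t, y_t, z_{t-1}, a_t, z_t)` form a time-inhomogeneous
Markov chain: `trajProb ω` is the path weight of `keyPath ω` for the kernel
`K_t(κ, κ') = P(s', y' | s, a) · π_{t+1}(a', z' | y', z'₋) · [z'₋ = z]`, and every other path of
keys has weight zero. For any such chain, the sum over paths of `G(κ_n) · ∏_{t ≥ n} c(κ_t)` equals
`∑_κ ν_n(κ) G(κ) V_n(κ)`: summing out the past produces the forward marginal `ν_n`, here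
`ζ_n · π_n`, and summing out the future produces the backward Feynman–Kac value `V = c · (K V)`.
For `c = exp (λ r)` this is the recursion defining `exp (λ Q)`; for `c = 1` it gives `V = 1`.
Taking for `G` the indicator of one key gives the conditional expectation, and `G = 1` gives `J`.
-/

open Matrix

theorem prod_eq_mul_prod_dite_succ {α : Type*} [CommMonoid α] {T : ℕ} (hT : 0 < T)
    (a : Fin T → α) :
    ∏ t, a t = a ⟨0, hT⟩ * ∏ t : Fin T, if h : t.val + 1 < T then a ⟨t + 1, h⟩ else 1 := by
  obtain ⟨k, rfl⟩ := Nat.exists_eq_add_of_lt hT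
  rw [Fin.prod_univ_succ, Fin.prod_univ_castSucc, dif_neg (by simp), mul_one]
  congr 1
  refine Finset.prod_congr rfl fun t _ => ?_
  rw [dif_pos (by rw [Fin.val_castSucc]; omega)]
  rfl

section FeynmanKac

variable {X : Type*} (K : ℕ → Matrix X X ℝ)

-- Laid out exactly like `trajProb`; `K t` moves the chain from time `t` to time `t + 1`.
def pathWeight (t₀ : ℕ) (μ : X → ℝ) {T : ℕ} (hT : 0 < T) (f : Fin T → X) : ℝ :=
  μ (f ⟨0, hT⟩) * ∏ t : Fin T, if h : t.val + 1 < T then K (t₀ + t) (f t) (f ⟨t + 1, h⟩) else 1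

theorem pathWeight_eq_mul_pathWeight_tail (t₀ : ℕ) (μ : X → ℝ) {k : ℕ} (f : Fin (k + 2) → X) :
    pathWeight K t₀ μ (Nat.succ_pos _) f
      = μ (f 0) * pathWeight K (t₀ + 1) (K t₀ (f 0)) (Nat.succ_pos _) (Fin.tail f) := by
  have htail : ∀ i : Fin (k + 1),
      (if h : (i.succ : ℕ) + 1 < k + 2 then K (t₀ + i.succ) (f i.succ) (f ⟨i.succ + 1, h⟩)
        else 1)
      = if h : (i : ℕ) + 1 < k + 1 then
          K (t₀ + 1 + i) (Fin.tail f i) (Fin.tail f ⟨i + 1, h⟩) else 1 := by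
    intro i
    by_cases h : (i : ℕ) + 1 < k + 1
    · rw [dif_pos (by simpa using h), dif_pos h]
      simp only [Fin.tail, Fin.val_succ, add_assoc, add_comm 1]
      rfl
    · rw [dif_neg (by simpa using h), dif_neg h]
  simp only [pathWeight, Fin.prod_univ_succ (n := k + 1), htail]
  rw [dif_pos (by simp)]
  rfl

theorem pathWeight_fin_one (t₀ : ℕ) (μ : X → ℝ) (f : Fin 1 → X) :
    pathWeight K t₀ μ Nat.one_pos f = μ (f 0) := by
  simp [pathWeight]

variable [Fintype X]

def marginal (t₀ : ℕ) (μ : X → ℝ) : ℕ → X → ℝ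
  | 0 => μ
  | n + 1 => marginal t₀ μ n ᵥ* K (t₀ + n)

-- `feynmanKac K c t m` is the backward value at time `t` with `m` steps still to go.
def feynmanKac (c : X → ℝ) : ℕ → ℕ → X → ℝ
  | _, 0 => c
  | t, m + 1 => c * (K t *ᵥ feynmanKac c (t + 1) m)

theorem sum_fun_fin_succ {k : ℕ} (F : (Fin (k + 1) → X) → ℝ) :
    ∑ f, F f = ∑ x, ∑ g : Fin k → X, F (Fin.cons x g) := by
  rw [← Fintype.sum_prod_type']
  exact Fintype.sum_equiv (Fin.consEquiv fun _ => X).symm _ _ fun f => by simp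

theorem sum_pathWeight_eq_sum_pathWeight_tail (t₀ : ℕ) (μ : X → ℝ) {k : ℕ}
    (Φ : (Fin (k + 1) → X) → ℝ) :
    ∑ f : Fin (k + 2) → X, pathWeight K t₀ μ (Nat.succ_pos _) f * Φ (Fin.tail f)
      = ∑ g, pathWeight K (t₀ + 1) (μ ᵥ* K t₀) (Nat.succ_pos _) g * Φ g := by
  have hlin : ∀ g : Fin (k + 1) → X, pathWeight K (t₀ + 1) (μ ᵥ* K t₀) (Nat.succ_pos _) g
      = ∑ x, μ x * pathWeight K (t₀ + 1) (K t₀ x) (Nat.succ_pos _) g := by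
    intro g
    simp only [pathWeight, vecMul, dotProduct, Finset.sum_mul, mul_assoc]
  rw [sum_fun_fin_succ]
  simp only [pathWeight_eq_mul_pathWeight_tail, Fin.cons_zero, Fin.tail_cons, hlin,
    Finset.sum_mul, mul_assoc]
  exact Finset.sum_comm

theorem sum_pathWeight_mul_prod (c : X → ℝ) (k t₀ : ℕ) (μ : X → ℝ) :
    ∑ f : Fin (k + 1) → X, pathWeight K t₀ μ (Nat.succ_pos _) f * ∏ t, c (f t)
      = ∑ x, μ x * feynmanKac K c t₀ k x := by
  induction k generalizing t₀ μ with
  | zero =>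
    rw [← (Equiv.funUnique (Fin 1) X).symm.sum_comp]
    simp [pathWeight_fin_one, feynmanKac]
  | succ k ih =>
    rw [sum_fun_fin_succ]
    simp only [pathWeight_eq_mul_pathWeight_tail, Fin.prod_univ_succ (n := k + 1),
      Fin.cons_zero, Fin.cons_succ, Fin.tail_cons]
    refine Finset.sum_congr rfl fun x _ => ?_
    have htail := ih (t₀ + 1) (K t₀ x)
    simp only [feynmanKac, Pi.mul_apply, mulVec, dotProduct] at htail ⊢
    rw [← htail, Finset.mul_sum, Finset.mul_sum]
    refine Finset.sum_congr rfl fun g _ => ?_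
    ring

theorem marginal_succ' (t₀ : ℕ) (μ : X → ℝ) (n : ℕ) :
    marginal K t₀ μ (n + 1) = marginal K (t₀ + 1) (μ ᵥ* K t₀) n := by
  induction n with
  | zero => rfl
  | succ n ih =>
    rw [marginal, ih, marginal]
    congr 2
    omega

theorem sum_pathWeight_mul_apply_mul_prod (c G : X → ℝ) (n : ℕ) {T : ℕ} (hn : n < T) (t₀ : ℕ)
    (μ : X → ℝ) :
    ∑ f : Fin T → X, pathWeight K t₀ μ (Nat.zero_lt_of_lt hn) f *
        (G (f ⟨n, hn⟩) * ∏ t : Fin T, if n ≤ t.val then c (f t) else 1)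
      = ∑ x, marginal K t₀ μ n x * G x * feynmanKac K c (t₀ + n) (T - 1 - n) x := by
  induction n generalizing T t₀ μ with
  | zero =>
    obtain _ | k := T
    · omega
    have hG : ∀ f : Fin (k + 1) → X, pathWeight K t₀ μ hn f * G (f ⟨0, hn⟩)
        = pathWeight K t₀ (μ * G) hn f := fun f => by
      simp only [pathWeight, Pi.mul_apply]; ring
    simp only [zero_le, if_true, ← mul_assoc, hG]
    rw [sum_pathWeight_mul_prod]
    rfl
  | succ n ih =>
    obtain _ | _ | k := T
    · omega
    · omega
    have hΦ := sum_pathWeight_eq_sum_pathWeight_tail K t₀ μ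
      (fun g : Fin (k + 1) → X => G (g ⟨n, by omega⟩) *
        ∏ t : Fin (k + 1), if n ≤ t.val then c (g t) else 1)
    have hprod : ∀ f : Fin (k + 2) → X,
        (∏ t : Fin (k + 2), if n + 1 ≤ t.val then c (f t) else 1)
          = ∏ t : Fin (k + 1), if n ≤ t.val then c (Fin.tail f t) else 1 := by
      intro f
      simp [Fin.prod_univ_succ, Fin.tail]
    have hG : ∀ f : Fin (k + 2) → X, G (f ⟨n + 1, hn⟩) = G (Fin.tail f ⟨n, by omega⟩) :=
      fun f => rfl
    simp only [hprod, hG]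
    rw [hΦ, ih (by omega : n < k + 1) (t₀ + 1) (μ ᵥ* K t₀), marginal_succ']
    congr! 3
    all_goals omega

theorem feynmanKac_one (hK : ∀ t, K t *ᵥ 1 = 1) (t m : ℕ) : feynmanKac K 1 t m = 1 := by
  induction m generalizing t with
  | zero => rfl
  | succ m ih => rw [feynmanKac, ih, hK, one_mul]

theorem mulVec_pos_of_mulVec_one {A : Matrix X X ℝ} (hA : ∀ i j, 0 ≤ A i j) (hA1 : A *ᵥ 1 = 1)
    {v : X → ℝ} (hv : ∀ j, 0 < v j) (i : X) : 0 < (A *ᵥ v) i := by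
  have hrow : ∑ j, A i j = 1 := by simpa [mulVec, dotProduct] using congrFun hA1 i
  obtain ⟨j, -, hj⟩ : ∃ j ∈ Finset.univ, A i j ≠ 0 := by
    by_contra! h
    simp [Finset.sum_eq_zero h] at hrow
  exact Finset.sum_pos' (fun j _ => mul_nonneg (hA i j) (hv j).le)
    ⟨j, Finset.mem_univ _, mul_pos ((hA i j).lt_of_ne' hj) (hv j)⟩

end FeynmanKac

section JointRule

variable {Y1 Y2 A1 A2 Z1 Z2 : Type}
  (π1 : ℕ → Y1 → Z1 → A1 × Z1 → ℝ) (π2 : ℕ → Y2 → Z2 → A2 × Z2 → ℝ)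

def jointRule (t : ℕ) (y : Y1 × Y2) (zm : Z1 × Z2) (a : A1 × A2) (z : Z1 × Z2) : ℝ :=
  π1 t y.1 zm.1 (a.1, z.1) * π2 t y.2 zm.2 (a.2, z.2)

variable [Fintype A1] [Fintype A2] [Fintype Z1] [Fintype Z2]

theorem jointRule_nonneg (hπ1 : IsPolicy π1) (hπ2 : IsPolicy π2) (t : ℕ) (y : Y1 × Y2)
    (zm : Z1 × Z2) (a : A1 × A2) (z : Z1 × Z2) : 0 ≤ jointRule π1 π2 t y zm a z :=
  mul_nonneg ((hπ1 t).1 _ _ _) ((hπ2 t).1 _ _ _)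

theorem sum_jointRule (hπ1 : IsPolicy π1) (hπ2 : IsPolicy π2) (t : ℕ) (y : Y1 × Y2)
    (zm : Z1 × Z2) : ∑ a, ∑ z, jointRule π1 π2 t y zm a z = 1 := by
  rw [← Fintype.sum_prod_type', ← (Equiv.prodProdProdComm A1 Z1 A2 Z2).sum_comp]
  simp only [jointRule, Equiv.prodProdProdComm_apply, Fintype.sum_prod_type, ← Finset.mul_sum,
    ← Finset.sum_mul]
  simp only [← Fintype.sum_prod_type, (hπ1 t).2, (hπ2 t).2, one_mul]

end JointRule

section KeyChain

variable {S Y1 Y2 A1 A2 Z1 Z2 : Type}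
  [Fintype S] [Fintype Y1] [Fintype Y2] [Fintype A1] [Fintype A2] [Fintype Z1] [Fintype Z2]
  (M : DecPOMDP S Y1 Y2 A1 A2 Z1 Z2)
  (π1 : ℕ → Y1 → Z1 → A1 × Z1 → ℝ) (π2 : ℕ → Y2 → Z2 → A2 × Z2 → ℝ)

local notation "Key" => S × (Y1 × Y2) × (Z1 × Z2) × (A1 × A2) × (Z1 × Z2)

-- The indicator makes consecutive keys agree on the agent state they share.
noncomputable def keyKernel (t : ℕ) : Matrix Key Key ℝ :=
  fun ⟨s, _, _, a, z⟩ ⟨s', y', zm', a', z'⟩ =>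
    if zm' = z then M.P s a (s', y'.1, y'.2) * jointRule π1 π2 (t + 1) y' zm' a' z' else 0

def keyInit : Key → ℝ := fun ⟨s, y, zm, a, z⟩ =>
  M.phi1 zm.1 * M.phi2 zm.2 * M.init (s, y.1, y.2) * jointRule π1 π2 0 y zm a z

noncomputable def expReward (lam : ℝ) : Key → ℝ := fun ⟨s, _, _, a, _⟩ => Real.exp (lam * M.r s a)

def keyPath (ω : Traj M) (t : Fin M.T) : Key :=
  (sOf M ω t, yOf M ω t, zprev M ω t, aOf M ω t, zOf M ω t)

theorem sum_key (F : Key → ℝ) :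
    ∑ κ, F κ = ∑ s, ∑ y, ∑ zm, ∑ a, ∑ z, F (s, y, zm, a, z) := by
  simp only [Fintype.sum_prod_type]

theorem keyKernel_nonneg (hπ1 : IsPolicy π1) (hπ2 : IsPolicy π2) (t : ℕ) (κ κ' : Key) :
    0 ≤ keyKernel M π1 π2 t κ κ' := by
  obtain ⟨s, y, zm, a, z⟩ := κ
  obtain ⟨s', y', zm', a', z'⟩ := κ'
  dsimp only [keyKernel]
  split_ifs
  · exact mul_nonneg (M.P_nonneg _ _ _) (jointRule_nonneg π1 π2 hπ1 hπ2 _ _ _ _ _)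
  · exact le_rfl

theorem keyKernel_mulVec_apply (t : ℕ) (v : Key → ℝ) (s : S) (y : Y1 × Y2) (zm : Z1 × Z2)
    (a : A1 × A2) (z : Z1 × Z2) :
    (keyKernel M π1 π2 t *ᵥ v) (s, y, zm, a, z)
      = ∑ s', ∑ y', ∑ a', ∑ z', M.P s a (s', y'.1, y'.2) * jointRule π1 π2 (t + 1) y' z a' z'
          * v (s', y', z, a', z') := by
  simp only [mulVec, dotProduct, sum_key, keyKernel, ite_mul, zero_mul]
  refine Finset.sum_congr rfl fun s' _ => Finset.sum_congr rfl fun y' _ => ?_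
  simp only [Finset.sum_ite_irrel, Finset.sum_const_zero, Finset.sum_ite_eq',
    Finset.mem_univ, if_true]

theorem keyKernel_mulVec_one (hπ1 : IsPolicy π1) (hπ2 : IsPolicy π2) (t : ℕ) :
    keyKernel M π1 π2 t *ᵥ 1 = 1 := by
  funext ⟨s, y, zm, a, z⟩
  simp only [keyKernel_mulVec_apply, Pi.one_apply, mul_one, ← Finset.mul_sum,
    sum_jointRule π1 π2 hπ1 hπ2]
  simpa [Fintype.sum_prod_type] using M.P_sum s a

theorem keyKernel_apply (t : ℕ) (κ κ' : Key) :
    keyKernel M π1 π2 t κ κ' = if κ'.2.2.1 = κ.2.2.2.2 then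
      M.P κ.1 κ.2.2.2.1 (κ'.1, κ'.2.1.1, κ'.2.1.2) *
        jointRule π1 π2 (t + 1) κ'.2.1 κ'.2.2.1 κ'.2.2.2.1 κ'.2.2.2.2 else 0 := rfl

theorem zprev_succ (ω : Traj M) {t : ℕ} (h : t + 1 < M.T) :
    zprev M ω ⟨t + 1, h⟩ = zOf M ω ⟨t, by omega⟩ := by
  simp [zprev]

theorem trajProb_eq_pathWeight (ω : Traj M) :
    trajProb M π1 π2 ω
      = pathWeight (keyKernel M π1 π2) 0 (keyInit M π1 π2) M.T_pos (keyPath M ω) := by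
  have hstep : ∀ t : Fin M.T,
      (if h : t.val + 1 < M.T then
        keyKernel M π1 π2 (0 + t) (keyPath M ω t) (keyPath M ω ⟨t + 1, h⟩) else 1)
      = (if h : t.val + 1 < M.T then M.P (sOf M ω t) (aOf M ω t)
            (sOf M ω ⟨t + 1, h⟩, (yOf M ω ⟨t + 1, h⟩).1, (yOf M ω ⟨t + 1, h⟩).2) else 1) *
        (if h : t.val + 1 < M.T then jointRule π1 π2 (t + 1) (yOf M ω ⟨t + 1, h⟩)
            (zprev M ω ⟨t + 1, h⟩) (aOf M ω ⟨t + 1, h⟩) (zOf M ω ⟨t + 1, h⟩) else 1) := by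
    intro t
    split_ifs with h
    · simp [keyKernel_apply, keyPath, zprev_succ M ω h, zero_add]
    · rw [mul_one]
  have hrule : (∏ t : Fin M.T,
      (π1 t.val (yOf M ω t).1 (zprev M ω t).1 ((aOf M ω t).1, (zOf M ω t).1) *
       π2 t.val (yOf M ω t).2 (zprev M ω t).2 ((aOf M ω t).2, (zOf M ω t).2)))
      = ∏ t : Fin M.T, jointRule π1 π2 t (yOf M ω t) (zprev M ω t) (aOf M ω t) (zOf M ω t) :=
    rfl
  rw [trajProb, hrule, pathWeight, Finset.prod_congr rfl fun t _ => hstep t,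
    Finset.prod_mul_distrib, prod_eq_mul_prod_dite_succ M.T_pos]
  simp only [keyPath, keyInit, zprev, if_true]
  ring

theorem keyPath_injective : Function.Injective (keyPath M) := by
  intro ω ω' h
  have hz : ω.1 = ω'.1 := by
    simpa [keyPath, zprev] using congrArg (fun f => (f ⟨0, M.T_pos⟩).2.2.1) h
  refine Prod.ext hz (funext fun t => ?_)
  have := congrFun h t
  simp only [keyPath, Prod.mk.injEq] at this
  obtain ⟨hs, hy, -, ha, hz⟩ := this
  exact Prod.ext (Prod.ext hs hy) (Prod.ext ha hz)

theorem mem_range_keyPath_of_pathWeight_ne_zero {t₀ : ℕ} {μ : Key → ℝ} {f : Fin M.T → Key}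
    (hf : pathWeight (keyKernel M π1 π2) t₀ μ M.T_pos f ≠ 0) : f ∈ Set.range (keyPath M) := by
  have hlink : ∀ t (h : t + 1 < M.T), (f ⟨t + 1, h⟩).2.2.1 = (f ⟨t, by omega⟩).2.2.2.2 := by
    intro t h
    have := Finset.prod_ne_zero_iff.mp (right_ne_zero_of_mul hf) ⟨t, by omega⟩ (Finset.mem_univ _)
    rw [dif_pos h, keyKernel_apply] at this
    exact of_not_not fun hne => this (if_neg hne)
  refine ⟨((f ⟨0, M.T_pos⟩).2.2.1,
    fun t => (((f t).1, (f t).2.1), ((f t).2.2.2.1, (f t).2.2.2.2))), funext fun t => ?_⟩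
  obtain ⟨_ | t, ht⟩ := t
  · rfl
  · simp only [keyPath, zprev_succ M _ ht, sOf, yOf, aOf, zOf, ← hlink t ht]

theorem sum_trajProb_mul (Φ : (Fin M.T → Key) → ℝ) :
    ∑ ω, trajProb M π1 π2 ω * Φ (keyPath M ω)
      = ∑ f, pathWeight (keyKernel M π1 π2) 0 (keyInit M π1 π2) M.T_pos f * Φ f := by
  refine Fintype.sum_of_injective _ (keyPath_injective M) _ _ (fun f hf => ?_) fun ω => by
    rw [trajProb_eq_pathWeight]
  by_contra h
  exact hf (mem_range_keyPath_of_pathWeight_ne_zero M π1 π2 (left_ne_zero_of_mul h))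

theorem marginal_keyKernel_apply (n : ℕ) (s : S) (y : Y1 × Y2) (zm : Z1 × Z2) (a : A1 × A2)
    (z : Z1 × Z2) :
    marginal (keyKernel M π1 π2) 0 (keyInit M π1 π2) n (s, y, zm, a, z)
      = zetaM M π1 π2 n s y zm * jointRule π1 π2 n y zm a z := by
  induction n generalizing s y zm a z with
  | zero =>
    simp only [marginal, keyInit, zetaM]
    ring
  | succ n ih =>
    rw [marginal, vecMul, dotProduct, sum_key, zetaM, Finset.sum_mul]
    simp only [ih, keyKernel, mul_ite, mul_zero, Finset.sum_ite_eq, Finset.mem_univ, if_true]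
    refine Finset.sum_congr rfl fun s' _ => ?_
    rw [Finset.sum_mul]
    refine Finset.sum_congr rfl fun y' _ => ?_
    rw [Finset.sum_comm, Finset.sum_mul]
    refine Finset.sum_congr rfl fun a' _ => ?_
    rw [Finset.sum_mul]
    refine Finset.sum_congr rfl fun zm' _ => ?_
    simp only [jointRule, zero_add]
    ring

theorem feynmanKac_keyKernel_apply (hπ1 : IsPolicy π1) (hπ2 : IsPolicy π2) {lam : ℝ}
    (hlam : lam ≠ 0) {m t : ℕ} (hmt : t + m + 1 = M.T) (s : S) (y : Y1 × Y2) (zm : Z1 × Z2)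
    (a : A1 × A2) (z : Z1 × Z2) :
    feynmanKac (keyKernel M π1 π2) (expReward M lam) t m (s, y, zm, a, z)
      = Real.exp (lam * Qaux M π1 π2 lam m s y zm a z) := by
  induction m generalizing t s y zm a z with
  | zero => rfl
  | succ m ih =>
    have hV := @ih (t + 1) (by omega)
    have hpos := mulVec_pos_of_mulVec_one (keyKernel_nonneg M π1 π2 hπ1 hπ2 t)
      (keyKernel_mulVec_one M π1 π2 hπ1 hπ2 t)
      (v := feynmanKac (keyKernel M π1 π2) (expReward M lam) (t + 1) m)
      (fun ⟨s', y', zm', a', z'⟩ => by rw [hV]; exact Real.exp_pos _) (s, y, zm, a, z)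
    have hT : M.T - 1 - m = t + 1 := by omega
    rw [keyKernel_mulVec_apply] at hpos
    rw [feynmanKac, Pi.mul_apply, keyKernel_mulVec_apply]
    simp only [Qaux, hT, hV, jointRule] at hpos ⊢
    rw [mul_add, ← mul_assoc, mul_one_div_cancel hlam, one_mul, Real.exp_add, Real.exp_log hpos]
    rfl

theorem sum_trajProb_mul_apply (hπ1 : IsPolicy π1) (hπ2 : IsPolicy π2) {n : ℕ} (hn : n < M.T)
    (G : Key → ℝ) :
    ∑ ω, trajProb M π1 π2 ω * G (keyPath M ω ⟨n, hn⟩)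
      = ∑ κ, marginal (keyKernel M π1 π2) 0 (keyInit M π1 π2) n κ * G κ := by
  have h := sum_pathWeight_mul_apply_mul_prod (keyKernel M π1 π2) 1 G n hn 0 (keyInit M π1 π2)
  simp only [Pi.one_apply, ite_self, Finset.prod_const_one, mul_one,
    feynmanKac_one _ (keyKernel_mulVec_one M π1 π2 hπ1 hπ2)] at h
  rw [sum_trajProb_mul M π1 π2 (fun f => G (f ⟨n, hn⟩)), h]

theorem sum_trajProb_mul_apply_mul_exp {n : ℕ} (hn : n < M.T) (lam : ℝ) (G : Key → ℝ) :
    ∑ ω, trajProb M π1 π2 ω * (G (keyPath M ω ⟨n, hn⟩) *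
        Real.exp (lam * ∑ τ : Fin M.T, if n ≤ τ.val then M.r (sOf M ω τ) (aOf M ω τ) else 0))
      = ∑ κ, marginal (keyKernel M π1 π2) 0 (keyInit M π1 π2) n κ * G κ *
          feynmanKac (keyKernel M π1 π2) (expReward M lam) n (M.T - 1 - n) κ := by
  have hexp : ∀ ω : Traj M,
      Real.exp (lam * ∑ τ : Fin M.T, if n ≤ τ.val then M.r (sOf M ω τ) (aOf M ω τ) else 0)
        = ∏ τ : Fin M.T, if n ≤ τ.val then expReward M lam (keyPath M ω τ) else 1 := by
    intro ω
    rw [Finset.mul_sum, Real.exp_sum]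
    refine Finset.prod_congr rfl fun τ _ => ?_
    split_ifs <;> simp [expReward, keyPath]
  simp only [hexp]
  rw [sum_trajProb_mul M π1 π2 (fun f => G (f ⟨n, hn⟩) *
      ∏ τ : Fin M.T, if n ≤ τ.val then expReward M lam (f τ) else 1),
    sum_pathWeight_mul_apply_mul_prod, zero_add]

end KeyChain

/-- **The risk-seeking centralized Q-function computes the conditional entropic
value of the reward-to-go.**  For every (0-indexed) time n < T and every tuple
(s,y,z₋,a,z) of positive probability,
exp(λ·Q^π_n(s,y,z₋,a,z)) = E^π[exp(λ·Σ_{τ=n}^{T−1} r(S_τ,A_τ)) | S_n=s, Y_n=y,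
Z_{n−1}=z₋, A_n=a, Z_n=z]; consequently
J^λ_{n:T}(π) = (1/λ)·log E^π[exp(λ·Σ_{τ=n}^{T−1} r(S_τ,A_τ))]. -/
theorem Q_is_conditional_entropic_reward_to_go
    (M : DecPOMDP S Y1 Y2 A1 A2 Z1 Z2)
    (π1 : ℕ → Y1 → Z1 → A1 × Z1 → ℝ) (π2 : ℕ → Y2 → Z2 → A2 × Z2 → ℝ)
    (hπ1 : IsPolicy π1) (hπ2 : IsPolicy π2)
    (lam : ℝ) (hlam : 0 < lam) :
    (∀ (n : ℕ) (hn : n < M.T) (s : S) (y : Y1 × Y2) (zm : Z1 × Z2)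
        (a : A1 × A2) (z : Z1 × Z2),
      0 < prEvent M π1 π2 (fun ω =>
        sOf M ω ⟨n, hn⟩ = s ∧ yOf M ω ⟨n, hn⟩ = y ∧ zprev M ω ⟨n, hn⟩ = zm ∧
        aOf M ω ⟨n, hn⟩ = a ∧ zOf M ω ⟨n, hn⟩ = z) →
      Real.exp (lam * Qfun M π1 π2 lam n s y zm a z)
        = (∑ ω : Traj M,
            if sOf M ω ⟨n, hn⟩ = s ∧ yOf M ω ⟨n, hn⟩ = y ∧ zprev M ω ⟨n, hn⟩ = zm ∧
               aOf M ω ⟨n, hn⟩ = a ∧ zOf M ω ⟨n, hn⟩ = z then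
              trajProb M π1 π2 ω *
                Real.exp (lam * ∑ τ : Fin M.T,
                  if n ≤ τ.val then M.r (sOf M ω τ) (aOf M ω τ) else 0)
            else 0) /
          prEvent M π1 π2 (fun ω =>
            sOf M ω ⟨n, hn⟩ = s ∧ yOf M ω ⟨n, hn⟩ = y ∧ zprev M ω ⟨n, hn⟩ = zm ∧
            aOf M ω ⟨n, hn⟩ = a ∧ zOf M ω ⟨n, hn⟩ = z)) ∧
    (∀ n : ℕ, n < M.T →
      Jrisk M π1 π2 lam n
        = (1/lam) * Real.log (∑ ω : Traj M,
            trajProb M π1 π2 ω *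
            Real.exp (lam * ∑ τ : Fin M.T,
              if n ≤ τ.val then M.r (sOf M ω τ) (aOf M ω τ) else 0))) := by
  have hV : ∀ n, n < M.T → ∀ s y zm a z,
      feynmanKac (keyKernel M π1 π2) (expReward M lam) n (M.T - 1 - n) (s, y, zm, a, z)
        = Real.exp (lam * Qfun M π1 π2 lam n s y zm a z) := fun n hn =>
    feynmanKac_keyKernel_apply M π1 π2 hπ1 hπ2 hlam.ne' (by omega)
  refine ⟨fun n hn s y zm a z hpos => ?_, fun n hn => ?_⟩
  · let k := (s, y, zm, a, z)
    let G := fun κ => if κ = k then (1 : ℝ) else 0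
    have hnum := sum_trajProb_mul_apply_mul_exp M π1 π2 hn lam G
    have hden := sum_trajProb_mul_apply M π1 π2 hπ1 hπ2 hn G
    rw [Fintype.sum_eq_single k fun κ hκ => by simp [G, hκ]] at hnum hden
    simp only [G, k, keyPath, Prod.mk.injEq, ite_mul, mul_ite, one_mul, zero_mul, mul_one,
      mul_zero, if_true, hV n hn] at hnum hden
    -- `prEvent` decides its event classically, `G` through `Prod` equality: only `convert` and
    -- `congr!` see that the two sums agree.
    rw [prEvent] at hpos ⊢
    have hνk : 0 < marginal (keyKernel M π1 π2) 0 (keyInit M π1 π2) n k := by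
      rw [← hden]; convert hpos using 3
    refine (mul_div_cancel_left₀ _ hνk.ne').symm.trans ?_
    rw [← hnum, ← hden]
    congr! 4
  · have h := sum_trajProb_mul_apply_mul_exp M π1 π2 hn lam 1
    simp only [Pi.one_apply, one_mul, mul_one] at h
    rw [Jrisk, h, sum_key]
    simp only [marginal_keyKernel_apply, hV n hn, jointRule]
end

section
/- Convexity of the entropic risk map for positive risk parameter: for every λ > 0, every X, Y : Ω → ℝ, and every α ∈ [0,1], ρ_λ(α·X + (1−α)·Y) ≤ α·ρ_λ(X) + (1−α)·ρ_λ(Y), where α·X + (1−α)·Y denotes the pointwise convex combination. -/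
open Finset

/-- `p` is a probability mass function on the finite type `Ω`. -/
def IsPMF {Ω : Type} [Fintype Ω] (p : Ω → ℝ) : Prop :=
  (∀ ω, 0 ≤ p ω) ∧ ∑ ω, p ω = 1

/-- The entropic risk value ρ_λ(X) = (1/λ)·log(Σ_ω p(ω)·exp(λ·X(ω))). -/
noncomputable def entRisk {Ω : Type} [Fintype Ω] (p : Ω → ℝ) (lam : ℝ) (X : Ω → ℝ) : ℝ :=
  (1/lam) * Real.log (∑ ω, p ω * Real.exp (lam * X ω))

/-- The expectation E[X] = Σ_ω p(ω)·X(ω). -/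
noncomputable def pmfExp {Ω : Type} [Fintype Ω] (p : Ω → ℝ) (X : Ω → ℝ) : ℝ :=
  ∑ ω, p ω * X ω

/-!
Since `exp (λ (α X + β Y)) = exp (λ X) ^ α * exp (λ Y) ^ β` for `α + β = 1`, Hölder's inequality
with exponents `1 / α`, `1 / β` bounds the partition sum `∑ p exp (λ (α X + β Y))` by the product
of the `α`-th and `β`-th powers of those of `X` and `Y`. Taking logarithms, `Z ↦ log ∑ p exp Z` is
convex, and `ρ_λ` is this function precomposed with `X ↦ λ X` and scaled by `1 / λ ≥ 0`.
-/

open Real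

theorem IsPMF.exists_pos {Ω : Type} [Fintype Ω] {p : Ω → ℝ} (hp : IsPMF p) : ∃ ω, 0 < p ω := by
  by_contra! h
  have := hp.2 ▸ sum_nonpos fun ω _ => h ω
  norm_num at this

/-- Hölder's inequality with exponents `1 / α` and `1 / β`, including the endpoint cases
`α = 0` and `β = 0` that `Real.inner_le_Lp_mul_Lq_of_nonneg` excludes. -/
theorem Real.sum_mul_rpow_mul_rpow_le {ι : Type*} (s : Finset ι) {w a b : ι → ℝ} {α β : ℝ}
    (hα : 0 ≤ α) (hβ : 0 ≤ β) (hαβ : α + β = 1) (hw : ∀ i ∈ s, 0 ≤ w i)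
    (ha : ∀ i ∈ s, 0 ≤ a i) (hb : ∀ i ∈ s, 0 ≤ b i)
    (hA : 0 < ∑ i ∈ s, w i * a i) (hB : 0 < ∑ i ∈ s, w i * b i) :
    ∑ i ∈ s, w i * (a i ^ α * b i ^ β)
      ≤ (∑ i ∈ s, w i * a i) ^ α * (∑ i ∈ s, w i * b i) ^ β := by
  set A := ∑ i ∈ s, w i * a i
  set B := ∑ i ∈ s, w i * b i
  -- normalise by `A` and `B`, then apply the weighted AM-GM inequality termwise
  have hterm : ∀ i ∈ s, w i * (a i ^ α * b i ^ β)
      ≤ A ^ α * B ^ β * (α / A * (w i * a i) + β / B * (w i * b i)) := by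
    intro i hi
    have hamgm : (a i / A) ^ α * (b i / B) ^ β ≤ α * (a i / A) + β * (b i / B) :=
      geom_mean_le_arith_mean2_weighted hα hβ (div_nonneg (ha i hi) hA.le)
        (div_nonneg (hb i hi) hB.le) hαβ
    rw [div_rpow (ha i hi) hA.le, div_rpow (hb i hi) hB.le] at hamgm
    calc w i * (a i ^ α * b i ^ β)
        = w i * (A ^ α * B ^ β * (a i ^ α / A ^ α * (b i ^ β / B ^ β))) := by
          field_simp
      _ ≤ w i * (A ^ α * B ^ β * (α * (a i / A) + β * (b i / B))) := by gcongr; exact hw i hi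
      _ = A ^ α * B ^ β * (α / A * (w i * a i) + β / B * (w i * b i)) := by ring
  calc ∑ i ∈ s, w i * (a i ^ α * b i ^ β)
      ≤ ∑ i ∈ s, A ^ α * B ^ β * (α / A * (w i * a i) + β / B * (w i * b i)) :=
        sum_le_sum hterm
    _ = A ^ α * B ^ β * (α / A * A + β / B * B) := by
      rw [← mul_sum, sum_add_distrib, ← mul_sum, ← mul_sum]
    _ = A ^ α * B ^ β := by
      rw [div_mul_cancel₀ _ hA.ne', div_mul_cancel₀ _ hB.ne', hαβ, mul_one]

theorem convexOn_log_sum_mul_exp {Ω : Type*} [Fintype Ω] {p : Ω → ℝ} (hp : ∀ ω, 0 ≤ p ω)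
    (hp' : ∃ ω, 0 < p ω) :
    ConvexOn ℝ Set.univ fun Z : Ω → ℝ => log (∑ ω, p ω * exp (Z ω)) := by
  have hsum_pos : ∀ Z : Ω → ℝ, 0 < ∑ ω, p ω * exp (Z ω) := fun Z =>
    let ⟨ω, hω⟩ := hp'
    sum_pos' (fun ω _ => mul_nonneg (hp ω) (exp_pos _).le) ⟨ω, mem_univ _, by positivity⟩
  refine ⟨convex_univ, fun X _ Y _ α β hα hβ hαβ => ?_⟩
  have hexp : ∀ ω, exp ((α • X + β • Y) ω) = exp (X ω) ^ α * exp (Y ω) ^ β := fun ω => by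
    rw [← exp_mul, ← exp_mul, ← exp_add]; simp [mul_comm]
  calc log (∑ ω, p ω * exp ((α • X + β • Y) ω))
      = log (∑ ω, p ω * (exp (X ω) ^ α * exp (Y ω) ^ β)) := by simp_rw [hexp]
    _ ≤ log ((∑ ω, p ω * exp (X ω)) ^ α * (∑ ω, p ω * exp (Y ω)) ^ β) :=
      log_le_log (by simpa only [hexp] using hsum_pos (α • X + β • Y)) <|
        sum_mul_rpow_mul_rpow_le _ hα hβ hαβ (fun ω _ => hp ω) (fun ω _ => (exp_pos _).le)
          (fun ω _ => (exp_pos _).le) (hsum_pos X) (hsum_pos Y)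
    _ = α • log (∑ ω, p ω * exp (X ω)) + β • log (∑ ω, p ω * exp (Y ω)) := by
      rw [log_mul (rpow_pos_of_pos (hsum_pos X) _).ne' (rpow_pos_of_pos (hsum_pos Y) _).ne',
        log_rpow (hsum_pos X), log_rpow (hsum_pos Y), smul_eq_mul, smul_eq_mul]

theorem convexOn_entRisk {Ω : Type} [Fintype Ω] {p : Ω → ℝ} (hp : ∀ ω, 0 ≤ p ω)
    (hp' : ∃ ω, 0 < p ω) {lam : ℝ} (hlam : 0 ≤ lam) :
    ConvexOn ℝ Set.univ (entRisk p lam) := by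
  have hcomp := (convexOn_log_sum_mul_exp hp hp').comp_linearMap (lam • LinearMap.id)
  exact hcomp.smul (one_div_nonneg.2 hlam)

theorem entRisk_convex_of_pos_general
    {Ω : Type} [Fintype Ω] (p : Ω → ℝ) (hp : IsPMF p)
    (lam : ℝ) (hlam : 0 < lam) (X Y : Ω → ℝ) (α : ℝ) (hα : α ∈ Set.Icc (0:ℝ) 1) :
    entRisk p lam (fun ω => α * X ω + (1 - α) * Y ω)
      ≤ α * entRisk p lam X + (1 - α) * entRisk p lam Y :=
  (convexOn_entRisk hp.1 hp.exists_pos hlam.le).2 (Set.mem_univ X) (Set.mem_univ Y) hα.1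
    (sub_nonneg.2 hα.2) (add_sub_cancel α 1)

/-- **Convexity of the entropic risk map for positive risk parameter**: for every
λ > 0, X, Y : Ω → ℝ and α ∈ [0,1],
ρ_λ(α·X + (1−α)·Y) ≤ α·ρ_λ(X) + (1−α)·ρ_λ(Y). -/
theorem entRisk_convex_of_pos
    {Ω : Type} [Fintype Ω] [Nonempty Ω] (p : Ω → ℝ) (hp : IsPMF p)
    (lam : ℝ) (hlam : 0 < lam) (X Y : Ω → ℝ) (α : ℝ) (hα : α ∈ Set.Icc (0:ℝ) 1) :
    entRisk p lam (fun ω => α * X ω + (1 - α) * Y ω)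
      ≤ α * entRisk p lam X + (1 - α) * entRisk p lam Y :=
  entRisk_convex_of_pos_general p hp lam hlam X Y α hα
end

section
/- Concavity of the entropic risk map for negative risk parameter: for every λ < 0, every X, Y : Ω → ℝ, and every α ∈ [0,1], ρ_λ(α·X + (1−α)·Y) ≥ α·ρ_λ(X) + (1−α)·ρ_λ(Y), where α·X + (1−α)·Y denotes the pointwise convex combination. -/
open Finset

/-!
Writing `F a = log ∑ ω, p ω * exp (a ω)`, we have `ρ_λ(X) = λ⁻¹ F(λX)`. Hölder's inequality with
exponents `1/α` and `1/(1-α)` makes `F` convex, and multiplying by `λ⁻¹ < 0` turns the convexity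
of `X ↦ F(λX)` into concavity of `ρ_λ`.
-/

open Real

section
variable {ι : Type*} (s : Finset ι) {w : ι → ℝ}

theorem sum_mul_rpow_mul_rpow_le (hw : ∀ i ∈ s, 0 ≤ w i) {f g : ι → ℝ}
    (hf : ∀ i ∈ s, 0 ≤ f i) (hg : ∀ i ∈ s, 0 ≤ g i)
    (hA : 0 < ∑ i ∈ s, w i * f i) (hB : 0 < ∑ i ∈ s, w i * g i) {α : ℝ} (h0 : 0 ≤ α) (h1 : α ≤ 1) :
    ∑ i ∈ s, w i * (f i ^ α * g i ^ (1 - α))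
      ≤ (∑ i ∈ s, w i * f i) ^ α * (∑ i ∈ s, w i * g i) ^ (1 - α) := by
  set A := ∑ i ∈ s, w i * f i
  set B := ∑ i ∈ s, w i * g i
  have hAB : 0 < A ^ α * B ^ (1 - α) := by positivity
  have amgm : ∀ i ∈ s, w i * (f i ^ α * g i ^ (1 - α))
      ≤ A ^ α * B ^ (1 - α) * (α / A * (w i * f i) + (1 - α) / B * (w i * g i)) := by
    intro i hi
    -- weighted AM–GM for the normalized values `f i / A` and `g i / B`
    have key := geom_mean_le_arith_mean2_weighted h0 (sub_nonneg.2 h1)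
      (div_nonneg (hf i hi) hA.le) (div_nonneg (hg i hi) hB.le) (add_sub_cancel α 1)
    rw [div_rpow (hf i hi) hA.le, div_rpow (hg i hi) hB.le, div_mul_div_comm, div_le_iff₀ hAB] at key
    calc w i * (f i ^ α * g i ^ (1 - α))
        ≤ w i * ((α * (f i / A) + (1 - α) * (g i / B)) * (A ^ α * B ^ (1 - α))) :=
          mul_le_mul_of_nonneg_left key (hw i hi)
      _ = _ := by ring
  calc ∑ i ∈ s, w i * (f i ^ α * g i ^ (1 - α))
      ≤ ∑ i ∈ s, A ^ α * B ^ (1 - α) * (α / A * (w i * f i) + (1 - α) / B * (w i * g i)) :=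
        sum_le_sum amgm
    _ = A ^ α * B ^ (1 - α) * (α / A * A + (1 - α) / B * B) := by
        rw [← mul_sum, sum_add_distrib, ← mul_sum, ← mul_sum]
    _ = A ^ α * B ^ (1 - α) := by field_simp; ring

theorem sum_mul_exp_pos (hw : ∀ i ∈ s, 0 ≤ w i) (hpos : ∃ i ∈ s, 0 < w i) (a : ι → ℝ) :
    0 < ∑ i ∈ s, w i * exp (a i) := by
  obtain ⟨j, hj, hwj⟩ := hpos
  exact sum_pos' (fun i hi => mul_nonneg (hw i hi) (exp_pos _).le) ⟨j, hj, by positivity⟩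

theorem convexOn_log_sum_mul_exp_s11 (hw : ∀ i ∈ s, 0 ≤ w i) (hpos : ∃ i ∈ s, 0 < w i) :
    ConvexOn ℝ Set.univ fun a : ι → ℝ => log (∑ i ∈ s, w i * exp (a i)) := by
  refine ⟨convex_univ, fun a _ b _ α β hα _ hαβ => ?_⟩
  obtain rfl : β = 1 - α := by linarith
  have hA := sum_mul_exp_pos s hw hpos a
  have hB := sum_mul_exp_pos s hw hpos b
  have holder := sum_mul_rpow_mul_rpow_le s hw (fun i _ => (exp_pos (a i)).le)
    (fun i _ => (exp_pos (b i)).le) hA hB hα (by linarith)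
  simp only [← exp_mul, ← exp_add] at holder
  calc log (∑ i ∈ s, w i * exp ((α • a + (1 - α) • b) i))
      ≤ log ((∑ i ∈ s, w i * exp (a i)) ^ α * (∑ i ∈ s, w i * exp (b i)) ^ (1 - α)) := by
        refine log_le_log (sum_mul_exp_pos s hw hpos _) ?_
        simpa only [Pi.add_apply, Pi.smul_apply, smul_eq_mul, mul_comm α, mul_comm (1 - α)]
          using holder
    _ = _ := by rw [log_mul (by positivity) (by positivity), log_rpow hA, log_rpow hB]; rfl

end

theorem entRisk_concave_of_neg_general
    {Ω : Type} [Fintype Ω] (p : Ω → ℝ) (hp : IsPMF p)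
    (lam : ℝ) (hlam : lam < 0) (X Y : Ω → ℝ) (α : ℝ) (hα : α ∈ Set.Icc (0:ℝ) 1) :
    α * entRisk p lam X + (1 - α) * entRisk p lam Y
      ≤ entRisk p lam (fun ω => α * X ω + (1 - α) * Y ω) := by
  have hpos : ∃ ω ∈ univ, 0 < p ω :=
    exists_lt_of_sum_lt (by simp [hp.2] : ∑ ω, (0 : ℝ) < ∑ ω, p ω)
  have hconv := (convexOn_log_sum_mul_exp_s11 univ (fun ω _ => hp.1 ω) hpos).2
    (Set.mem_univ fun ω => lam * X ω) (Set.mem_univ fun ω => lam * Y ω)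
    hα.1 (sub_nonneg.2 hα.2) (add_sub_cancel α 1)
  have hcomb : α • (fun ω => lam * X ω) + (1 - α) • (fun ω => lam * Y ω)
      = fun ω => lam * (α * X ω + (1 - α) * Y ω) := by
    ext ω; simp only [Pi.add_apply, Pi.smul_apply, smul_eq_mul]; ring
  rw [hcomb, smul_eq_mul, smul_eq_mul] at hconv
  have hscaled := mul_le_mul_of_nonpos_left hconv (one_div_neg.2 hlam).le
  simp only [entRisk]
  linarith

/-- **Concavity of the entropic risk map for negative risk parameter**: for every
λ < 0, X, Y : Ω → ℝ and α ∈ [0,1],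
ρ_λ(α·X + (1−α)·Y) ≥ α·ρ_λ(X) + (1−α)·ρ_λ(Y). -/
theorem entRisk_concave_of_neg
    {Ω : Type} [Fintype Ω] [Nonempty Ω] (p : Ω → ℝ) (hp : IsPMF p)
    (lam : ℝ) (hlam : lam < 0) (X Y : Ω → ℝ) (α : ℝ) (hα : α ∈ Set.Icc (0:ℝ) 1) :
    α * entRisk p lam X + (1 - α) * entRisk p lam Y
      ≤ entRisk p lam (fun ω => α * X ω + (1 - α) * Y ω) :=
  entRisk_concave_of_neg_general p hp lam hlam X Y α hα
end
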